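/- Let k ≥ 6 and n ≥ (k−1)² + 1 be integers, and let G be a W_k-semi-saturated graph on n vertices with maximum degree at most n − 2. Then for every set R ⊆ V(G) of vertices, the sum of the degrees of the vertices in R satisfies Σ_{v∈R} deg(v) ≥ 3|R| − min{|C_G|, n − |R|}. -/

import Mathlib

/-!
Write `d` for the degree and `C` for the set of vertices of degree `2`. Every vertex has a
non-neighbour, and adding an edge at it must create a `W_k`, all of whose vertices have degree at
least `3`; so the minimum degree is `2`, and
`∑_{v ∈ R} d v = 3|R| - |C ∩ R| + ∑_{v ∈ R, d v ≥ 3} (d v - 3)`.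
It remains to show that this excess is at least `|C ∩ R| - |V ∖ R|`.

Adding an edge `uw` at a vertex `u ∈ C` makes `u` a rim vertex of a wheel (its new degree `3` is
less than the hub degree `k`) whose three wheel neighbours are exactly `N(u) ∪ {w}`. Consequently
`C` is independent, distinct vertices of `C` have distinct neighbourhoods (otherwise `C_k` would
contain a triangle), and two vertices of `C` share a neighbour of degree at least `k`, the hub.
If all of `C ∩ R` is adjacent to one such hub `a`, then either `a ∈ R`, and `a` is also adjacent
to the `k` rim vertices of the wheel through two vertices of `C ∩ R`, at most two of which are in
`C`; or the second neighbours of the vertices of `C ∩ R` are distinct, all but one of them have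
degree at least `k`, and those outside `R` lie in `V ∖ (R ∪ {a})`. Otherwise the pairwise hubs
`a, b, c` of three vertices of `C` are distinct, have degree at least `k ≥ 6` and force
`|C| ≤ 3`; one of them lies in `R` unless `|V ∖ R| ≥ 3`.
-/

open SimpleGraph

/-- `G` contains a copy of `F`, i.e. a subgraph isomorphic to `F`. -/
def HasCopy {V W : Type*} (F : SimpleGraph V) (G : SimpleGraph W) : Prop :=
  ∃ f : F →g G, Function.Injective f

/-- `G` is `F`-free: `G` contains no subgraph isomorphic to `F`. -/
def IsFree {V W : Type*} (F : SimpleGraph V) (G : SimpleGraph W) : Prop :=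
  ¬ HasCopy F G

/-- `G` is `F`-semi-saturated: for every pair of non-adjacent vertices `u ≠ v`,
the graph `G + uv` contains a copy of `F` using the edge `uv`. -/
def IsSemiSat {V W : Type*} (F : SimpleGraph V) (G : SimpleGraph W) : Prop :=
  ∀ u v : W, u ≠ v → ¬ G.Adj u v →
    ∃ f : F →g (G ⊔ fromEdgeSet {s(u, v)}), Function.Injective f ∧
      ∃ a b : V, F.Adj a b ∧ f a = u ∧ f b = v

/-- `G` is `F`-saturated: `F`-free and `F`-semi-saturated. -/
def IsSat {V W : Type*} (F : SimpleGraph V) (G : SimpleGraph W) : Prop :=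
  IsFree F G ∧ IsSemiSat F G

/-- The join `G ∨ H` of two graphs. -/
def graphJoin {V W : Type*} (G : SimpleGraph V) (H : SimpleGraph W) :
    SimpleGraph (V ⊕ W) where
  Adj x y :=
    match x, y with
    | Sum.inl a, Sum.inl b => G.Adj a b
    | Sum.inr a, Sum.inr b => H.Adj a b
    | Sum.inl _, Sum.inr _ => True
    | Sum.inr _, Sum.inl _ => True
  symm := ⟨by rintro (a | a) (b | b) h <;> first | exact G.adj_symm h | exact H.adj_symm h | trivial⟩
  loopless := ⟨by rintro (a | a) h <;> first | exact G.irrefl h | exact H.irrefl h⟩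

/-- The wheel `W_k = K_1 ∨ C_k`. -/
def wheel (k : ℕ) : SimpleGraph (Unit ⊕ Fin k) :=
  graphJoin (⊥ : SimpleGraph Unit) (cycleGraph k)

/-- `sat(n, F)`: the minimum number of edges in an `F`-saturated graph on `n` vertices. -/
noncomputable def satNumber {V : Type*} (F : SimpleGraph V) (n : ℕ) : ℕ :=
  sInf { m | ∃ G : SimpleGraph (Fin n), IsSat F G ∧ G.edgeSet.ncard = m }

/-- `ssat(n, F)`: the minimum number of edges in an `F`-semi-saturated graph on `n` vertices. -/
noncomputable def ssatNumber {V : Type*} (F : SimpleGraph V) (n : ℕ) : ℕ :=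
  sInf { m | ∃ G : SimpleGraph (Fin n), IsSemiSat F G ∧ G.edgeSet.ncard = m }

/-- The degree of a vertex. -/
noncomputable def degS {n : ℕ} (G : SimpleGraph (Fin n)) (u : Fin n) : ℕ :=
  (G.neighborSet u).ncard

/-- `A_G`: the vertices of degree at least `k - 1`. -/
def setA {n : ℕ} (k : ℕ) (G : SimpleGraph (Fin n)) : Set (Fin n) :=
  {u | k - 1 ≤ degS G u}

/-- `B_G`: the vertices of degree between `3` and `k - 2`. -/
def setB {n : ℕ} (k : ℕ) (G : SimpleGraph (Fin n)) : Set (Fin n) :=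
  {u | 3 ≤ degS G u ∧ degS G u ≤ k - 2}

/-- `C_G`: the vertices of degree `2`. -/
def setC {n : ℕ} (G : SimpleGraph (Fin n)) : Set (Fin n) :=
  {u | degS G u = 2}

/-- `A*_G = B_G ∪ C_G`. -/
def setAstar {n : ℕ} (k : ℕ) (G : SimpleGraph (Fin n)) : Set (Fin n) :=
  setB k G ∪ setC G

open Finset Function

section Hom

variable {V W : Type*} [Finite W] {F : SimpleGraph V} {H : SimpleGraph W}

lemma ncard_neighborSet_le_of_injective (f : F →g H) (hf : Injective f) (z : V) :
    (F.neighborSet z).ncard ≤ (H.neighborSet (f z)).ncard := by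
  rw [← Set.ncard_image_of_injective _ hf]
  exact Set.ncard_le_ncard (f.image_neighborSet_subset z)

lemma image_neighborSet_eq_of_ncard_le (f : F →g H) (hf : Injective f) {z : V}
    (h : (H.neighborSet (f z)).ncard ≤ (F.neighborSet z).ncard) :
    f '' F.neighborSet z = H.neighborSet (f z) :=
  Set.eq_of_subset_of_ncard_le (f.image_neighborSet_subset z)
    (by rwa [Set.ncard_image_of_injective _ hf])

end Hom

section AddEdge

variable {V : Type*} {G : SimpleGraph V} {u v x y : V}

lemma adj_of_sup_edge_adj (hxu : x ≠ u) (hxv : x ≠ v) (h : (G ⊔ edge u v).Adj x y) :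
    G.Adj x y := by
  rcases h with h | h
  · exact h
  · rw [edge_adj] at h
    grind

lemma neighborSet_sup_edge_of_ne (hxu : x ≠ u) (hxv : x ≠ v) :
    (G ⊔ edge u v).neighborSet x = G.neighborSet x :=
  Set.ext fun _ => ⟨adj_of_sup_edge_adj hxu hxv, Or.inl⟩

lemma neighborSet_sup_edge_left (huv : u ≠ v) :
    (G ⊔ edge u v).neighborSet u = insert v (G.neighborSet u) := by
  ext y
  simp only [neighborSet_sup, Set.mem_union, mem_neighborSet, edge_adj, Set.mem_insert_iff]
  grind

lemma neighborSet_sup_edge_right (huv : u ≠ v) :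
    (G ⊔ edge u v).neighborSet v = insert u (G.neighborSet v) := by
  rw [edge_comm]
  exact neighborSet_sup_edge_left huv.symm

end AddEdge

section DegreeAddEdge

variable {n : ℕ} {G : SimpleGraph (Fin n)} {u v x : Fin n}

lemma degS_sup_edge_of_ne (hxu : x ≠ u) (hxv : x ≠ v) :
    degS (G ⊔ edge u v) x = degS G x := by
  rw [degS, neighborSet_sup_edge_of_ne hxu hxv, degS]

lemma degS_sup_edge_left (huv : u ≠ v) (h : ¬G.Adj u v) :
    degS (G ⊔ edge u v) u = degS G u + 1 := by
  rw [degS, neighborSet_sup_edge_left huv,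
    Set.ncard_insert_of_notMem (show v ∉ G.neighborSet u from h), degS]

lemma degS_sup_edge_right (huv : u ≠ v) (h : ¬G.Adj u v) :
    degS (G ⊔ edge u v) v = degS G v + 1 := by
  rw [edge_comm]
  exact degS_sup_edge_left huv.symm fun h' => h h'.symm

lemma exists_ne_not_adj (hx : degS G x + 1 < n) : ∃ w, w ≠ x ∧ ¬G.Adj x w := by
  by_contra! h
  have : (Set.univ : Set (Fin n)) ⊆ insert x (G.neighborSet x) := fun w _ =>
    (eq_or_ne w x).imp id (h w)
  have := (Set.ncard_le_ncard this).trans (Set.ncard_insert_le _ _)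
  rw [Set.ncard_univ, Nat.card_eq_fintype_card, Fintype.card_fin] at this
  exact absurd this (by unfold degS at hx; omega)

end DegreeAddEdge

section Wheel

variable {k : ℕ}

open Fin.CommRing in
lemma cycleGraph_cliqueFree_three (hk : 4 ≤ k) : (cycleGraph k).CliqueFree 3 := by
  obtain ⟨m, rfl⟩ : ∃ m, k = m + 4 := ⟨k - 4, by omega⟩
  intro s hs
  obtain ⟨i, j, l, hij, hil, hjl, rfl, -⟩ := is3Clique_iff.mp hs
  have hne : ∀ c : ℕ, 0 < c → c < m + 4 → (c : Fin (m + 4)) ≠ 0 := fun c h0 hc h => by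
    rw [Fin.natCast_eq_zero] at h
    exact absurd (Nat.le_of_dvd h0 h) (by omega)
  have h1 := hne 1 (by omega) (by omega)
  have h3 := hne 3 (by omega) (by omega)
  push_cast at h1 h3
  have hsub : ∀ {a b : Fin (m + 4)}, (cycleGraph (m + 4)).Adj a b → a - b = 1 ∨ a - b = -1 :=
    fun h => h.imp id fun h => by linear_combination -h
  have key : (i - j) + (j - l) - (i - l) = 0 := by ring
  rcases hsub hij with e₁ | e₁ <;> rcases hsub hjl with e₂ | e₂ <;> rcases hsub hil with e₃ | e₃ <;>
    rw [e₁, e₂, e₃] at key <;>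
    first
    | exact h1 (by linear_combination key)
    | exact h1 (by linear_combination -key)
    | exact h3 (by linear_combination key)
    | exact h3 (by linear_combination -key)

lemma wheel_adj_inl_inr (i : Fin k) : (wheel k).Adj (Sum.inl ()) (Sum.inr i) := trivial

lemma wheel_neighborSet_inl : (wheel k).neighborSet (Sum.inl ()) = Set.range Sum.inr := by
  ext (a | i)
  · exact ⟨fun h => (h : (⊥ : SimpleGraph Unit).Adj () a).elim, fun ⟨_, h⟩ => Sum.inr_ne_inl h⟩
  · exact ⟨fun _ => ⟨i, rfl⟩, fun _ => wheel_adj_inl_inr i⟩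

lemma ncard_wheel_neighborSet_inl : ((wheel k).neighborSet (Sum.inl ())).ncard = k := by
  rw [wheel_neighborSet_inl, ← Set.image_univ, Set.ncard_image_of_injective _ Sum.inr_injective,
    Set.ncard_univ, Nat.card_eq_fintype_card, Fintype.card_fin]

lemma wheel_neighborSet_inr (i : Fin k) :
    (wheel k).neighborSet (Sum.inr i) =
      insert (Sum.inl ()) (Sum.inr '' (cycleGraph k).neighborSet i) := by
  ext (a | j)
  · simpa using (wheel_adj_inl_inr i).symm
  · simp only [mem_neighborSet, Set.mem_insert_iff, reduceCtorEq, Set.mem_image,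
      Sum.inr.injEq, exists_eq_right, false_or]
    rfl

lemma ncard_wheel_neighborSet_inr (hk : 3 ≤ k) (i : Fin k) :
    ((wheel k).neighborSet (Sum.inr i)).ncard = 3 := by
  obtain ⟨m, rfl⟩ : ∃ m, k = m + 3 := ⟨k - 3, by omega⟩
  rw [wheel_neighborSet_inr, Set.ncard_insert_of_notMem (by simp),
    Set.ncard_image_of_injective _ Sum.inr_injective, ← coe_neighborFinset,
    Set.ncard_coe_finset, card_neighborFinset_eq_degree, cycleGraph_degree_three_le]

lemma three_le_ncard_wheel_neighborSet (hk : 3 ≤ k) (z : Unit ⊕ Fin k) :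
    3 ≤ ((wheel k).neighborSet z).ncard := by
  rcases z with ⟨⟩ | i
  · rwa [ncard_wheel_neighborSet_inl]
  · rw [ncard_wheel_neighborSet_inr hk]

end Wheel

section WheelThroughEdge

variable {n k : ℕ} {G : SimpleGraph (Fin n)} {u v : Fin n} {f : wheel k →g G ⊔ edge u v}

lemma three_le_degS_sup_edge_apply (hk : 3 ≤ k) (hf : Injective f) (z : Unit ⊕ Fin k) :
    3 ≤ degS (G ⊔ edge u v) (f z) :=
  (three_le_ncard_wheel_neighborSet hk z).trans (ncard_neighborSet_le_of_injective f hf z)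

lemma exists_eq_inr_of_degS_lt (hf : Injective f) {z : Unit ⊕ Fin k}
    (h : degS (G ⊔ edge u v) (f z) < k) : ∃ i, z = Sum.inr i := by
  rcases z with ⟨⟩ | i
  · have := ncard_neighborSet_le_of_injective f hf (Sum.inl ())
    rw [ncard_wheel_neighborSet_inl] at this
    exact absurd h (not_lt.mpr this)
  · exact ⟨i, rfl⟩

lemma sup_edge_adj_apply_inl {z : Unit ⊕ Fin k} (hz : f z ≠ f (Sum.inl ())) :
    (G ⊔ edge u v).Adj (f (Sum.inl ())) (f z) := by
  rcases z with ⟨⟩ | i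
  · exact absurd rfl hz
  · exact f.map_adj (wheel_adj_inl_inr i)

lemma adj_apply_inl (hu : f (Sum.inl ()) ≠ u) (hv : f (Sum.inl ()) ≠ v) (i : Fin k) :
    G.Adj (f (Sum.inl ())) (f (Sum.inr i)) :=
  adj_of_sup_edge_adj hu hv (f.map_adj (wheel_adj_inl_inr i))

lemma le_degS_apply_inl (hf : Injective f) (hu : f (Sum.inl ()) ≠ u) (hv : f (Sum.inl ()) ≠ v) :
    k ≤ degS G (f (Sum.inl ())) := by
  calc k = ((wheel k).neighborSet (Sum.inl ())).ncard := ncard_wheel_neighborSet_inl.symm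
    _ ≤ degS (G ⊔ edge u v) (f (Sum.inl ())) := ncard_neighborSet_le_of_injective f hf _
    _ = degS G (f (Sum.inl ())) := degS_sup_edge_of_ne hu hv

lemma exists_image_neighborSet_eq (hk : 4 ≤ k) (hf : Injective f) {z : Unit ⊕ Fin k}
    (h : degS (G ⊔ edge u v) (f z) = 3) :
    ∃ i, z = Sum.inr i ∧
      f '' (wheel k).neighborSet (Sum.inr i) = (G ⊔ edge u v).neighborSet (f z) := by
  obtain ⟨i, rfl⟩ := exists_eq_inr_of_degS_lt hf (by rw [h]; omega)
  refine ⟨i, rfl, image_neighborSet_eq_of_ncard_le f hf ?_⟩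
  rw [ncard_wheel_neighborSet_inr (by omega)]
  exact h.le

lemma exists_image_neighborSet_eq_left (hk : 4 ≤ k) (hf : Injective f) (huv : u ≠ v)
    (h : ¬G.Adj u v) {z : Unit ⊕ Fin k} (hz : f z = u) (hu : degS G u = 2) :
    ∃ i, z = Sum.inr i ∧ f '' (wheel k).neighborSet (Sum.inr i) = insert v (G.neighborSet u) := by
  obtain ⟨i, rfl, hi⟩ :=
    exists_image_neighborSet_eq hk hf (by rw [hz, degS_sup_edge_left huv h, hu])
  exact ⟨i, rfl, by rw [hi, hz, neighborSet_sup_edge_left huv]⟩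

lemma exists_image_neighborSet_eq_right (hk : 4 ≤ k) (hf : Injective f) (huv : u ≠ v)
    (h : ¬G.Adj u v) {z : Unit ⊕ Fin k} (hz : f z = v) (hv : degS G v = 2) :
    ∃ i, z = Sum.inr i ∧ f '' (wheel k).neighborSet (Sum.inr i) = insert u (G.neighborSet v) := by
  obtain ⟨i, rfl, hi⟩ :=
    exists_image_neighborSet_eq hk hf (by rw [hz, degS_sup_edge_right huv h, hv])
  exact ⟨i, rfl, by rw [hi, hz, neighborSet_sup_edge_right huv]⟩

end WheelThroughEdge

lemma IsSemiSat.exists_hom {V W : Type*} {F : SimpleGraph V} {G : SimpleGraph W} {u v : W}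
    (hG : IsSemiSat F G) (huv : u ≠ v) (h : ¬G.Adj u v) :
    ∃ f : F →g G ⊔ edge u v, Injective f ∧ ∃ a b, F.Adj a b ∧ f a = u ∧ f b = v :=
  hG u v huv h

section SemiSaturated

variable {n k : ℕ} {G : SimpleGraph (Fin n)} {u v w x a b c q u₁ u₂ u₃ : Fin n}

lemma neighborSet_eq_pair (hu : degS G u = 2) (ha : G.Adj u a) (hx : G.Adj u x) (hax : a ≠ x) :
    G.neighborSet u = {a, x} :=
  (Set.eq_of_subset_of_ncard_le (Set.insert_subset ha (Set.singleton_subset_iff.mpr hx))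
    (by rw [Set.ncard_pair hax]; exact hu.le)).symm

lemma exists_neighborSet_eq_pair (hu : degS G u = 2) (ha : G.Adj u a) :
    ∃ x, x ≠ a ∧ G.neighborSet u = {a, x} := by
  obtain ⟨x, hx, hxa⟩ := Set.exists_ne_of_one_lt_ncard (s := G.neighborSet u) (by
    rw [← degS, hu]; omega) a
  exact ⟨x, hxa, neighborSet_eq_pair hu ha hx hxa.symm⟩

lemma IsSemiSat.two_le_degS (hG : IsSemiSat (wheel k) G) (hk : 3 ≤ k)
    (hx : degS G x + 1 < n) : 2 ≤ degS G x := by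
  obtain ⟨w, hwx, hxw⟩ := exists_ne_not_adj hx
  obtain ⟨f, hf, a, -, -, hfa, -⟩ := hG.exists_hom hwx.symm hxw
  have := three_le_degS_sup_edge_apply hk hf a
  rw [hfa, degS_sup_edge_left hwx.symm hxw] at this
  omega

lemma IsSemiSat.three_le_degS_of_adj (hG : IsSemiSat (wheel k) G) (hk : 4 ≤ k) (hn : 3 < n)
    (hu : degS G u = 2) (hux : G.Adj u x) : 3 ≤ degS G x := by
  obtain ⟨w, hwu, huw⟩ := exists_ne_not_adj (G := G) (x := u) (by rw [hu]; omega)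
  obtain ⟨f, hf, a, -, -, hfa, -⟩ := hG.exists_hom hwu.symm huw
  obtain ⟨i, rfl, hi⟩ := exists_image_neighborSet_eq_left hk hf hwu.symm huw hfa hu
  obtain ⟨z, -, hz⟩ : x ∈ f '' _ := by rw [hi]; exact Set.mem_insert_of_mem w hux
  have := three_le_degS_sup_edge_apply (by omega) hf z
  rwa [hz, degS_sup_edge_of_ne hux.ne' (by rintro rfl; exact huw hux)] at this

lemma IsSemiSat.not_adj_of_degS_eq_two (hG : IsSemiSat (wheel k) G) (hk : 4 ≤ k) (hn : 3 < n)
    (hu : degS G u = 2) (hv : degS G v = 2) : ¬G.Adj u v := fun h => by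
  have := hG.three_le_degS_of_adj hk hn hu h
  omega

lemma IsSemiSat.exists_adj_adj_le_degS (hG : IsSemiSat (wheel k) G) (huv : u ≠ v)
    (h : ¬G.Adj u v) (hu : degS G u + 2 ≤ k) (hv : degS G v + 2 ≤ k) :
    ∃ a, k ≤ degS G a ∧ G.Adj u a ∧ G.Adj v a := by
  obtain ⟨f, hf, b, c, -, hfb, hfc⟩ := hG.exists_hom huv h
  obtain ⟨i, rfl⟩ := exists_eq_inr_of_degS_lt hf (by rw [hfb, degS_sup_edge_left huv h]; omega)
  obtain ⟨j, rfl⟩ := exists_eq_inr_of_degS_lt hf (by rw [hfc, degS_sup_edge_right huv h]; omega)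
  have hu' : f (Sum.inl ()) ≠ u := fun h => Sum.inl_ne_inr (hf (h.trans hfb.symm))
  have hv' : f (Sum.inl ()) ≠ v := fun h => Sum.inl_ne_inr (hf (h.trans hfc.symm))
  refine ⟨f (Sum.inl ()), le_degS_apply_inl hf hu' hv', ?_, ?_⟩
  · simpa only [hfb] using (adj_apply_inl hu' hv' i).symm
  · simpa only [hfc] using (adj_apply_inl hu' hv' j).symm

lemma IsSemiSat.eq_of_neighborSet_eq (hG : IsSemiSat (wheel k) G) (hk : 4 ≤ k)
    (hu : degS G u = 2) (hv : degS G v = 2) (hN : G.neighborSet u = G.neighborSet v) :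
    u = v := by
  by_contra huv
  have h : ¬G.Adj u v := fun h => G.irrefl (show v ∈ G.neighborSet v by rw [← hN]; exact h)
  obtain ⟨f, hf, a, b, hab, hfa, hfb⟩ := hG.exists_hom huv h
  obtain ⟨i, rfl, hi⟩ := exists_image_neighborSet_eq_left hk hf huv h hfa hu
  obtain ⟨j, rfl, hj⟩ := exists_image_neighborSet_eq_right hk hf huv h hfb hv
  -- a common neighbour of `u` and `v` other than the hub is a rim vertex adjacent to both
  obtain ⟨y, hy, hyh⟩ := Set.exists_ne_of_one_lt_ncard (s := G.neighborSet u)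
    (by rw [← degS, hu]; omega) (f (Sum.inl ()))
  have rim : ∀ {r}, y ∈ f '' (wheel k).neighborSet (Sum.inr r) →
      ∃ l, (cycleGraph k).Adj r l ∧ f (Sum.inr l) = y := by
    rintro r ⟨⟨⟩ | l, hl, rfl⟩
    · exact absurd rfl hyh
    · exact ⟨l, hl, rfl⟩
  obtain ⟨l, hil, rfl⟩ := rim (by rw [hi]; exact Set.mem_insert_of_mem _ hy)
  obtain ⟨l', hjl', hl'⟩ := rim (by rw [hj, ← hN]; exact Set.mem_insert_of_mem _ hy)
  rw [Sum.inr_injective (hf hl')] at hjl'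
  exact cycleGraph_cliqueFree_three hk {i, j, l} (is3Clique_triple_iff.mpr ⟨hab, hil, hjl'⟩)

lemma IsSemiSat.le_degS_of_not_adj (hG : IsSemiSat (wheel k) G) (hk : 4 ≤ k)
    (hu : degS G u = 2) (hN : G.neighborSet u = {a, x}) (hqa : ¬G.Adj a q) (hq : q ≠ a)
    (hqx : q ≠ x) : k ≤ degS G x := by
  have hua : G.Adj u a := show a ∈ G.neighborSet u by rw [hN]; exact Set.mem_insert a {x}
  have hqu : q ≠ u := by rintro rfl; exact hqa hua.symm
  have huq : ¬G.Adj u q := fun h => by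
    rcases (show q ∈ ({a, x} : Set (Fin n)) by rw [← hN]; exact h) with h | h
    exacts [hq h, hqx h]
  obtain ⟨f, hf, c, d, -, hfc, hfd⟩ := hG.exists_hom hqu.symm huq
  obtain ⟨i, rfl, hi⟩ := exists_image_neighborSet_eq_left hk hf hqu.symm huq hfc hu
  rw [hN] at hi
  have hhub : f (Sum.inl ()) ∈ (insert q {a, x} : Set (Fin n)) := by
    rw [← hi]; exact Set.mem_image_of_mem f (wheel_adj_inl_inr i).symm
  -- the hub is adjacent to every other vertex of the copy, so it can be neither `q` nor `a`
  rcases hhub with hhq | hha | hhx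
  · obtain ⟨z, -, hz⟩ : a ∈ f '' _ := hi ▸ Set.mem_insert_of_mem q (Set.mem_insert a {x})
    have := sup_edge_adj_apply_inl (f := f) (z := z) (by rw [hz, hhq]; exact hq.symm)
    rw [hz, hhq] at this
    exact absurd (adj_of_sup_edge_adj hua.ne' hq.symm this.symm) hqa
  · have := sup_edge_adj_apply_inl (f := f) (z := d) (by rw [hfd, hha]; exact hq)
    rw [hfd, hha] at this
    exact absurd (adj_of_sup_edge_adj hua.ne' hq.symm this) hqa
  · rw [← hhx]
    exact le_degS_apply_inl hf (fun h => Sum.inl_ne_inr (hf (h.trans hfc.symm)))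
      (by rw [hhx]; exact hqx.symm)

lemma IsSemiSat.exists_adj_le_degS (hG : IsSemiSat (wheel k) G) (hk : 4 ≤ k) (hn : k + 2 ≤ n)
    (hu : degS G u = 2) : ∃ a, G.Adj u a ∧ k ≤ degS G a := by
  obtain ⟨p, q, hpq, hN⟩ := Set.ncard_eq_two.mp hu
  have hup : G.Adj u p := show p ∈ G.neighborSet u by rw [hN]; exact Set.mem_insert p {q}
  have huq : G.Adj u q := show q ∈ G.neighborSet u by rw [hN]; exact Set.mem_insert_of_mem p rfl
  by_cases hr : ∃ r, r ≠ p ∧ r ≠ q ∧ ¬G.Adj p r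
  · obtain ⟨r, hrp, hrq, hpr⟩ := hr
    exact ⟨q, huq, hG.le_degS_of_not_adj hk hu hN hpr hrp hrq⟩
  · push Not at hr
    refine ⟨p, hup, ?_⟩
    have hcover : (Set.univ : Set (Fin n)) ⊆ G.neighborSet p ∪ {p, q} := fun r _ => by
      by_cases hrp : r = p
      · exact Or.inr (Or.inl hrp)
      by_cases hrq : r = q
      · exact Or.inr (Or.inr hrq)
      exact Or.inl (hr r hrp hrq)
    have := (Set.ncard_le_ncard hcover).trans (Set.ncard_union_le _ _)
    rw [Set.ncard_univ, Nat.card_eq_fintype_card, Fintype.card_fin, Set.ncard_pair hpq] at this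
    unfold degS
    omega

lemma IsSemiSat.exists_subset_neighborSet (hG : IsSemiSat (wheel k) G) (hk : 4 ≤ k)
    (hn : 3 < n) (hu₁ : degS G u₁ = 2) (hu₂ : degS G u₂ = 2) (h₁₂ : u₁ ≠ u₂)
    (ha₁ : G.Adj u₁ a) (ha₂ : G.Adj u₂ a) :
    ∃ s ⊆ G.neighborSet a, s.ncard = k ∧ ∀ w ∈ s, degS G w = 2 → w = u₁ ∨ w = u₂ := by
  have h : ¬G.Adj u₁ u₂ := hG.not_adj_of_degS_eq_two hk hn hu₁ hu₂
  obtain ⟨f, hf, b, c, -, hfb, hfc⟩ := hG.exists_hom h₁₂ h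
  obtain ⟨i, rfl, hi⟩ := exists_image_neighborSet_eq_left hk hf h₁₂ h hfb hu₁
  obtain ⟨j, rfl, hj⟩ := exists_image_neighborSet_eq_right hk hf h₁₂ h hfc hu₂
  have hne₁ : f (Sum.inl ()) ≠ u₁ := fun h => Sum.inl_ne_inr (hf (h.trans hfb.symm))
  have hne₂ : f (Sum.inl ()) ≠ u₂ := fun h => Sum.inl_ne_inr (hf (h.trans hfc.symm))
  have hmem₁ : G.Adj u₁ (f (Sum.inl ())) := by
    have : f (Sum.inl ()) ∈ insert u₂ (G.neighborSet u₁) := by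
      rw [← hi]; exact Set.mem_image_of_mem f (wheel_adj_inl_inr i).symm
    exact this.resolve_left hne₂
  have hmem₂ : G.Adj u₂ (f (Sum.inl ())) := by
    have : f (Sum.inl ()) ∈ insert u₁ (G.neighborSet u₂) := by
      rw [← hj]; exact Set.mem_image_of_mem f (wheel_adj_inl_inr j).symm
    exact this.resolve_left hne₁
  have hhub : f (Sum.inl ()) = a := by
    by_contra hne
    refine h₁₂ (hG.eq_of_neighborSet_eq hk hu₁ hu₂ ?_)
    rw [neighborSet_eq_pair hu₁ ha₁ hmem₁ (Ne.symm hne),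
      neighborSet_eq_pair hu₂ ha₂ hmem₂ (Ne.symm hne)]
  refine ⟨f '' (wheel k).neighborSet (Sum.inl ()), ?_, ?_, ?_⟩
  · rw [← hhub, ← neighborSet_sup_edge_of_ne hne₁ hne₂]
    exact f.image_neighborSet_subset _
  · rw [Set.ncard_image_of_injective _ hf, ncard_wheel_neighborSet_inl]
  · rintro _ ⟨z, -, rfl⟩ hz
    by_contra! hne
    have := three_le_degS_sup_edge_apply (by omega) hf z
    rw [degS_sup_edge_of_ne hne.1 hne.2] at this
    omega

lemma IsSemiSat.card_add_le_degS (hG : IsSemiSat (wheel k) G) (hk : 4 ≤ k) (hn : 3 < n)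
    {C : Finset (Fin n)} (hC : ∀ u ∈ C, degS G u = 2 ∧ G.Adj u a) (hC2 : 1 < #C) :
    #C + k ≤ degS G a + 2 := by
  obtain ⟨u₁, hu₁, u₂, hu₂, h₁₂⟩ := one_lt_card.mp hC2
  obtain ⟨s, hs, hsk, hs2⟩ := hG.exists_subset_neighborSet hk hn (hC u₁ hu₁).1 (hC u₂ hu₂).1
    h₁₂ (hC u₁ hu₁).2 (hC u₂ hu₂).2
  have hunion : s ∪ ↑C ⊆ G.neighborSet a :=
    Set.union_subset hs fun u hu => (hC u hu).2.symm
  have hinter : s ∩ ↑C ⊆ {u₁, u₂} := fun w ⟨hws, hwC⟩ => hs2 w hws (hC w hwC).1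
  have h₁ := Set.ncard_union_add_ncard_inter s C
  have h₂ := Set.ncard_le_ncard hunion
  have h₃ := (Set.ncard_le_ncard hinter).trans (Set.ncard_insert_le u₁ {u₂})
  rw [Set.ncard_coe_finset] at h₁
  rw [Set.ncard_singleton] at h₃
  unfold degS
  omega

lemma IsSemiSat.eq_or_eq_or_eq (hG : IsSemiSat (wheel k) G) (hk : 4 ≤ k) (hn : 3 < n)
    (hu₁ : degS G u₁ = 2) (hu₂ : degS G u₂ = 2) (hu₃ : degS G u₃ = 2)
    (hN₁ : G.neighborSet u₁ = {a, b}) (hN₂ : G.neighborSet u₂ = {a, c})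
    (hN₃ : G.neighborSet u₃ = {b, c}) (hab : a ≠ b) (hac : a ≠ c) (hbc : b ≠ c)
    (hw : degS G w = 2) : w = u₁ ∨ w = u₂ ∨ w = u₃ := by
  by_contra! hne
  obtain ⟨hw₁, hw₂, hw₃⟩ := hne
  have meets : ∀ {u y z}, degS G u = 2 → G.neighborSet u = {y, z} → w ≠ u →
      G.Adj w y ∨ G.Adj w z := by
    intro u y z hu hN hwu
    obtain ⟨h, -, hwh, huh⟩ := hG.exists_adj_adj_le_degS hwu
      (hG.not_adj_of_degS_eq_two hk hn hw hu) (by omega) (by omega)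
    rcases (show h ∈ ({y, z} : Set (Fin n)) by rw [← hN]; exact huh) with rfl | rfl
    exacts [Or.inl hwh, Or.inr hwh]
  have ne : ∀ {u y z}, degS G u = 2 → G.neighborSet u = {y, z} → w ≠ u →
      G.Adj w y → G.Adj w z → y ≠ z → False := fun hu hN hwu hy hz hyz =>
    hwu (hG.eq_of_neighborSet_eq hk hw hu (by rw [neighborSet_eq_pair hw hy hz hyz, hN]))
  rcases meets hu₃ hN₃ hw₃ with hwb | hwc
  · rcases meets hu₂ hN₂ hw₂ with hwa | hwc
    · exact ne hu₁ hN₁ hw₁ hwa hwb hab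
    · exact ne hu₃ hN₃ hw₃ hwb hwc hbc
  · rcases meets hu₁ hN₁ hw₁ with hwa | hwb
    · exact ne hu₂ hN₂ hw₂ hwa hwc hac
    · exact ne hu₃ hN₃ hw₃ hwb hwc hbc

lemma IsSemiSat.exists_hubs_of_not_adj (hG : IsSemiSat (wheel k) G) (hk : 4 ≤ k) (hn : 3 < n)
    (hu₁ : degS G u₁ = 2) (hu₂ : degS G u₂ = 2) (hu₃ : degS G u₃ = 2) (h₁₂ : u₁ ≠ u₂)
    (h₁a : G.Adj u₁ a) (h₂a : G.Adj u₂ a) (h₃a : ¬G.Adj u₃ a) :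
    ∃ b c, k ≤ degS G b ∧ k ≤ degS G c ∧ a ≠ b ∧ a ≠ c ∧ b ≠ c ∧
      ∀ w, degS G w = 2 → w = u₁ ∨ w = u₂ ∨ w = u₃ := by
  have h₁₃ : u₁ ≠ u₃ := by rintro rfl; exact h₃a h₁a
  have h₂₃ : u₂ ≠ u₃ := by rintro rfl; exact h₃a h₂a
  obtain ⟨b, hb, h₁b, h₃b⟩ := hG.exists_adj_adj_le_degS h₁₃
    (hG.not_adj_of_degS_eq_two hk hn hu₁ hu₃) (by omega) (by omega)
  obtain ⟨c, hc, h₂c, h₃c⟩ := hG.exists_adj_adj_le_degS h₂₃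
    (hG.not_adj_of_degS_eq_two hk hn hu₂ hu₃) (by omega) (by omega)
  have hab : a ≠ b := by rintro rfl; exact h₃a h₃b
  have hac : a ≠ c := by rintro rfl; exact h₃a h₃c
  have hN₁ := neighborSet_eq_pair hu₁ h₁a h₁b hab
  have hN₂ := neighborSet_eq_pair hu₂ h₂a h₂c hac
  have hbc : b ≠ c := by
    rintro rfl
    exact h₁₂ (hG.eq_of_neighborSet_eq hk hu₁ hu₂ (hN₁.trans hN₂.symm))
  exact ⟨b, c, hb, hc, hab, hac, hbc, fun w hw => hG.eq_or_eq_or_eq hk hn hu₁ hu₂ hu₃ hN₁ hN₂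
    (neighborSet_eq_pair hu₃ h₃b h₃c hbc) hab hac hbc hw⟩

end SemiSaturated

lemma sum_eq_three_mul_card_sub_card_add {ι : Type*} (R : Finset ι) (d : ι → ℕ)
    (hd : ∀ v ∈ R, 2 ≤ d v) :
    ∑ v ∈ R, (d v : ℤ) = 3 * #R - #{v ∈ R | d v = 2} + ∑ v ∈ R with 3 ≤ d v, ((d v : ℤ) - 3) := by
  have h₂ : ∑ v ∈ R with d v = 2, ((d v : ℤ) - 3) = -#{v ∈ R | d v = 2} := by
    rw [sum_congr rfl fun v hv => by rw [(mem_filter.mp hv).2]]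
    simp
  have h₃ : {v ∈ R | ¬d v = 2} = {v ∈ R | 3 ≤ d v} :=
    filter_congr fun v hv => by have := hd v hv; omega
  have h₄ : ∑ v ∈ R, ((d v : ℤ) - 3) = ∑ v ∈ R, (d v : ℤ) - 3 * #R := by
    rw [sum_sub_distrib, sum_const, nsmul_eq_mul, mul_comm]
  have := sum_filter_add_sum_filter_not R (fun v => d v = 2) (fun v => (d v : ℤ) - 3)
  rw [h₂, h₃, h₄] at this
  linarith

section Excess

variable {n k : ℕ} (G : SimpleGraph (Fin n)) {R S : Finset (Fin n)} {w a b c : Fin n}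

noncomputable def excess (R : Finset (Fin n)) : ℤ :=
  ∑ v ∈ R with 3 ≤ degS G v, ((degS G v : ℤ) - 3)

lemma excess_nonneg (R : Finset (Fin n)) : 0 ≤ excess G R :=
  sum_nonneg fun v hv => by have := (mem_filter.mp hv).2; omega

lemma sub_three_le_excess (hw : w ∈ R) (h : 3 ≤ degS G w) : (degS G w : ℤ) - 3 ≤ excess G R :=
  single_le_sum (f := fun v => (degS G v : ℤ) - 3)
    (fun v hv => by have := (mem_filter.mp hv).2; omega) (mem_filter.mpr ⟨hw, h⟩)

lemma card_le_excess (hS : S ⊆ R) (h : ∀ v ∈ S, 4 ≤ degS G v) : (#S : ℤ) ≤ excess G R := by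
  have hS' : S ⊆ {v ∈ R | 3 ≤ degS G v} :=
    fun v hv => mem_filter.mpr ⟨hS hv, by have := h v hv; omega⟩
  calc (#S : ℤ) = ∑ v ∈ S, 1 := by simp
    _ ≤ ∑ v ∈ S, ((degS G v : ℤ) - 3) := sum_le_sum fun v hv => by have := h v hv; omega
    _ ≤ excess G R := sum_le_sum_of_subset_of_nonneg hS' fun v hv _ => by
      have := (mem_filter.mp hv).2; omega

lemma card_sub_card_compl_le_excess_of_card_le_three (hk : 6 ≤ k) {C : Finset (Fin n)}
    (hC : #C ≤ 3) (ha : k ≤ degS G a) (hb : k ≤ degS G b) (hc : k ≤ degS G c)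
    (hab : a ≠ b) (hac : a ≠ c) (hbc : b ≠ c) : (#C : ℤ) - #Rᶜ ≤ excess G R := by
  by_cases habc : a ∈ R ∨ b ∈ R ∨ c ∈ R
  · obtain ⟨y, hyR, hy⟩ : ∃ y ∈ R, k ≤ degS G y := by
      rcases habc with h | h | h
      exacts [⟨a, h, ha⟩, ⟨b, h, hb⟩, ⟨c, h, hc⟩]
    have := sub_three_le_excess G hyR (by omega)
    omega
  · push Not at habc
    have : #{a, b, c} ≤ #Rᶜ := card_le_card (by simp [insert_subset_iff, habc])
    rw [card_eq_three.mpr ⟨a, b, c, hab, hac, hbc, rfl⟩] at this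
    have := excess_nonneg G R
    omega

end Excess

section Surplus

variable {n k : ℕ} {G : SimpleGraph (Fin n)} {a : Fin n}

lemma IsSemiSat.card_sub_card_compl_le_excess_of_forall_adj (hG : IsSemiSat (wheel k) G)
    (hk : 4 ≤ k) (ha : degS G a + 1 < n) {R C : Finset (Fin n)}
    (hC : ∀ u ∈ C, degS G u = 2 ∧ G.Adj u a) (haR : a ∉ R) : (#C : ℤ) - #Rᶜ ≤ excess G R := by
  choose! x hxa hxN using fun u hu => exists_neighborSet_eq_pair (hC u hu).1 (hC u hu).2
  have hinj : Set.InjOn x C := fun u hu u' hu' h => hG.eq_of_neighborSet_eq hk (hC u hu).1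
    (hC u' hu').1 (by rw [hxN u hu, hxN u' hu', h])
  obtain ⟨q, hqa, haq⟩ := exists_ne_not_adj ha
  set S := {y ∈ C.image x | y ∈ R ∧ k ≤ degS G y}
  -- since `q` is not adjacent to `a`, every second neighbour `x u ≠ q` has degree at least `k`
  have hsub : C.image x ⊆ S ∪ insert q (Rᶜ.erase a) := by
    intro y hy
    obtain ⟨u, hu, rfl⟩ := mem_image.mp hy
    by_cases hq : x u = q
    · simp [hq]
    by_cases hR : x u ∈ R
    · exact mem_union_left _ (mem_filter.mpr ⟨hy, hR,
        hG.le_degS_of_not_adj hk (hC u hu).1 (hxN u hu) haq hqa (Ne.symm hq)⟩)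
    · exact mem_union_right _ (mem_insert_of_mem (mem_erase.mpr ⟨hxa u hu, mem_compl.mpr hR⟩))
  have hcard : #C ≤ #S + #Rᶜ := calc
    #C = #(C.image x) := (card_image_of_injOn hinj).symm
    _ ≤ #S + (#(Rᶜ.erase a) + 1) := (card_le_card hsub).trans
      ((card_union_le _ _).trans (Nat.add_le_add_left (card_insert_le _ _) _))
    _ = #S + #Rᶜ := by rw [card_erase_add_one (mem_compl.mpr haR)]
  have := card_le_excess G (S := S) (fun y hy => (mem_filter.mp hy).2.1)
    fun y hy => hk.trans (mem_filter.mp hy).2.2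
  omega

theorem IsSemiSat.card_sub_card_compl_le_excess (hG : IsSemiSat (wheel k) G) (hk : 6 ≤ k)
    (hn : k + 2 ≤ n) (hdeg : ∀ v, degS G v + 1 < n) (R : Finset (Fin n)) :
    (#{v ∈ R | degS G v = 2} : ℤ) - #Rᶜ ≤ excess G R := by
  set C := {v ∈ R | degS G v = 2}
  have hC : ∀ u ∈ C, degS G u = 2 := fun u hu => (mem_filter.mp hu).2
  rcases le_or_gt #C #Rᶜ with hle | hlt
  · have := excess_nonneg G R
    omega
  rcases (by omega : #C = 1 ∨ 1 < #C) with hC1 | hC2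
  · obtain ⟨u, hu⟩ := card_pos.mp (by omega : 0 < #C)
    obtain ⟨a, -, ha⟩ := hG.exists_adj_le_degS (by omega) hn (hC u hu)
    have haR : a ∈ R := by
      by_contra h
      have := card_pos.mpr ⟨a, mem_compl.mpr h⟩
      omega
    have := sub_three_le_excess G haR (by omega)
    omega
  obtain ⟨u₁, hu₁, u₂, hu₂, h₁₂⟩ := one_lt_card.mp hC2
  obtain ⟨a, ha, h₁a, h₂a⟩ := hG.exists_adj_adj_le_degS h₁₂
    (hG.not_adj_of_degS_eq_two (by omega) (by omega) (hC u₁ hu₁) (hC u₂ hu₂))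
    (by rw [hC u₁ hu₁]; omega) (by rw [hC u₂ hu₂]; omega)
  by_cases hcom : ∀ u ∈ C, G.Adj u a
  · have hCa : ∀ u ∈ C, degS G u = 2 ∧ G.Adj u a := fun u hu => ⟨hC u hu, hcom u hu⟩
    by_cases haR : a ∈ R
    · have := hG.card_add_le_degS (by omega) (by omega) hCa hC2
      have := sub_three_le_excess G haR (by omega)
      omega
    · exact hG.card_sub_card_compl_le_excess_of_forall_adj (by omega) (hdeg a) hCa haR
  push Not at hcom
  obtain ⟨u₃, hu₃, h₃a⟩ := hcom
  obtain ⟨b, c, hb, hc, hab, hac, hbc, hall⟩ := hG.exists_hubs_of_not_adj (by omega) (by omega)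
    (hC u₁ hu₁) (hC u₂ hu₂) (hC u₃ hu₃) h₁₂ h₁a h₂a h₃a
  have hC3 : #C ≤ 3 :=
    (card_le_card fun w hw => by simpa using hall w (hC w hw)).trans card_le_three
  exact card_sub_card_compl_le_excess_of_card_le_three G hk hC3 ha hb hc hab hac hbc

end Surplus

/-- Lemma 3.4: for every vertex set `R`,
`Σ_{v ∈ R} deg(v) ≥ 3|R| - min{|C_G|, n - |R|}`. -/
theorem degree_sum_lower_bound (k n : ℕ) (hk : 6 ≤ k) (hn : (k - 1) ^ 2 + 1 ≤ n)
    (G : SimpleGraph (Fin n)) (hG : IsSemiSat (wheel k) G)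
    (hdeg : ∀ v : Fin n, degS G v ≤ n - 2) (R : Finset (Fin n)) :
    3 * (R.card : ℤ) - min ((setC G).ncard : ℤ) ((n : ℤ) - R.card) ≤
      ∑ v ∈ R, (degS G v : ℤ) := by
  have hkn : k + 2 ≤ n := by
    obtain ⟨m, rfl⟩ : ∃ m, k = m + 6 := ⟨k - 6, by omega⟩
    rw [show m + 6 - 1 = m + 5 by omega] at hn
    nlinarith
  have hdeg' : ∀ v, degS G v + 1 < n := fun v => by have := hdeg v; omega
  have hsum := sum_eq_three_mul_card_sub_card_add R (degS G) fun v _ =>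
    hG.two_le_degS (by omega) (hdeg' v)
  have hC : #{v ∈ R | degS G v = 2} ≤ (setC G).ncard := by
    rw [← Set.ncard_coe_finset]
    exact Set.ncard_le_ncard fun v hv => (mem_filter.mp hv).2
  have hsurplus := hG.card_sub_card_compl_le_excess hk hkn hdeg' R
  have hexcess := excess_nonneg G R
  have hcompl := card_compl_add_card R
  rw [Fintype.card_fin] at hcompl
  rw [excess] at hsurplus hexcess
  omega
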